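/- Let F be a field, V a vector space over F, n ≥ 1, and D an n-determinant on V. Let W = F × V, let p_1 : F × V → F and p_2 : F × V → V be the projections onto the first and second coordinates, and define D' : W^{n+1} → F by D'(w_1,…,w_{n+1}) = Σ_{i=1}^{n+1} (−1)^{i−1} · p_1(w_i) · D(p_2(w_1),…, p_2(w_i) omitted, …, p_2(w_{n+1})), where in the i-th summand the entry p_2(w_i) is dropped from the (n+1)-tuple. Then D' is an (n+1)-determinant on W. -/

import Mathlib

/-! An `n`-determinant `D` is multilinear and alternating: whenever `D v ≠ 0`, the main equation
says that `v` is a basis and that `u ↦ D (update v k u)` is `D v` times its `k`-th coordinate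
functional. Hence `D = c • b.det` for a basis `b` of `V` and some `c ≠ 0`. The function `D'` is
then `c` times the Laplace expansion, along the row of first coordinates, of the determinant in the
basis `(1, 0), (0, b 0), …, (0, b (n - 1))` of `F × V`, and for any `c • det` with `c ≠ 0` the main
equation is Cramer's rule. -/

/-- The "main equation" for a function `D : V^n → F`:
for every `(n+1)`-tuple `v₁, …, vₙ, b`,
`D(v₁,…,vₙ) • b = ∑ₖ D(v₁,…,b,…,vₙ) • vₖ` (the `k`-th summand replaces `vₖ` by `b`). -/
def MainEq (F : Type*) {V : Type*} [Field F] [AddCommGroup V] [Module F V]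
    (n : ℕ) (D : (Fin n → V) → F) : Prop :=
  ∀ (v : Fin n → V) (b : V),
    D v • b = ∑ k : Fin n, D (Function.update v k b) • v k

/-- An `n`-determinant on `V`: a nonzero function `D : V^n → F` satisfying the main
equation, where moreover the dimension of `V` over `F` equals `n`. -/
def IsDeterminant (F V : Type*) [Field F] [AddCommGroup V] [Module F V]
    (n : ℕ) (D : (Fin n → V) → F) : Prop :=
  D ≠ 0 ∧ MainEq F n D ∧ Module.finrank F V = n

/-- `D : V^n → F` is multilinear: additive and homogeneous of degree 1
in each variable separately. -/
def IsMultilinearFn (F : Type*) {V : Type*} [Field F] [AddCommGroup V] [Module F V]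
    (n : ℕ) (D : (Fin n → V) → F) : Prop :=
  (∀ (v : Fin n → V) (k : Fin n) (u w : V),
      D (Function.update v k (u + w))
        = D (Function.update v k u) + D (Function.update v k w)) ∧
  (∀ (v : Fin n → V) (k : Fin n) (c : F) (u : V),
      D (Function.update v k (c • u)) = c * D (Function.update v k u))

/-- `D : V^n → F` is antisymmetric: interchanging any two arguments changes the sign. -/
def IsAntisymmetricFn (F : Type*) {V : Type*} [Field F] [AddCommGroup V] [Module F V]
    (n : ℕ) (D : (Fin n → V) → F) : Prop :=
  ∀ (v : Fin n → V) (i j : Fin n), i ≠ j → D (v ∘ Equiv.swap i j) = - D v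

open Module Submodule

namespace MainEq

variable {F V : Type*} [Field F] [AddCommGroup V] [Module F V] {n : ℕ} {D : (Fin n → V) → F}

theorem top_le_span (hD : MainEq F n D) {v : Fin n → V} (hv : D v ≠ 0) :
    ⊤ ≤ span F (Set.range v) := by
  intro b _
  rw [← inv_smul_smul₀ hv b, hD v b]
  exact smul_mem _ _ (sum_mem fun k _ => smul_mem _ _ (subset_span ⟨k, rfl⟩))

theorem finite (hD : MainEq F n D) (hne : D ≠ 0) : Module.Finite F V := by
  obtain ⟨v, hv⟩ := Function.ne_iff.mp hne
  exact ⟨eq_top_iff.mpr (hD.top_le_span hv) ▸ fg_span (Set.finite_range v)⟩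

theorem linearIndependent (hD : MainEq F n D) (hrank : finrank F V = n) {v : Fin n → V}
    (hv : D v ≠ 0) : LinearIndependent F v :=
  linearIndependent_of_top_le_span_of_card_eq_finrank (hD.top_le_span hv) (by simp [hrank])

theorem exists_linearMap_update (hD : MainEq F n D) (hrank : finrank F V = n)
    (v : Fin n → V) (k : Fin n) : ∃ φ : V →ₗ[F] F, ∀ u, D (Function.update v k u) = φ u := by
  by_cases hzero : ∀ u, D (Function.update v k u) = 0
  · exact ⟨0, by simpa using hzero⟩
  push Not at hzero
  obtain ⟨w, hw⟩ := hzero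
  set v' := Function.update v k w
  let e := Basis.mk (hD.linearIndependent hrank hw) (hD.top_le_span hw)
  refine ⟨D v' • e.coord k, fun u => ?_⟩
  have hcoord := congrArg (e.coord k) (hD v' u)
  rw [map_smul, map_sum, Finset.sum_eq_single k (fun j _ hj => by
    rw [map_smul, Basis.mk_coord_apply_ne hj, smul_zero]) (by simp), map_smul,
    Basis.mk_coord_apply_eq, smul_eq_mul, smul_eq_mul, mul_one, Function.update_idem] at hcoord
  exact hcoord.symm

noncomputable def toAlternatingMap (hD : MainEq F n D) (hrank : finrank F V = n) :
    V [⋀^Fin n]→ₗ[F] F where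
  toFun := D
  map_update_add' v k x y := by
    obtain ⟨φ, hφ⟩ := hD.exists_linearMap_update hrank v k
    convert map_add φ x y using 1 <;> simp only [← hφ] <;> congr!
  map_update_smul' v k c x := by
    obtain ⟨φ, hφ⟩ := hD.exists_linearMap_update hrank v k
    convert map_smul φ c x using 1 <;> simp only [← hφ] <;> congr!
  map_eq_zero_of_eq' v i j hij hne := by
    by_contra hv
    exact hne ((hD.linearIndependent hrank hv).injective hij)

theorem eq_mul_det (hD : MainEq F n D) (hrank : finrank F V = n) (b : Basis (Fin n) F V)
    (v : Fin n → V) : D v = D b * b.det v :=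
  congr($((hD.toAlternatingMap hrank).eq_smul_basis_det b) v)

end MainEq

namespace Module.Basis

variable {F V : Type*} [Field F] [AddCommGroup V] [Module F V] {n : ℕ}

theorem mainEq_det (e : Basis (Fin n) F V) : MainEq F n e.det := by
  intro w b
  have hcramer : ∀ k, e.det (Function.update w k b) = (e.toMatrix w).cramer (e.repr b) k :=
    fun k => by rw [e.det_apply, e.toMatrix_update, Matrix.cramer_apply]
  apply e.equivFun.injective
  funext i
  have := congrFun (Matrix.mulVec_cramer (e.toMatrix w) (e.repr b)) i
  simp only [Matrix.mulVec, dotProduct, e.toMatrix_apply] at this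
  simp [hcramer, e.det_apply, ← this, mul_comm]

theorem isDeterminant_mul_det (e : Basis (Fin n) F V) {c : F} (hc : c ≠ 0) :
    IsDeterminant F V n (fun w => c * e.det w) := by
  refine ⟨fun h => hc (by simpa [e.det_self] using congrFun h e), fun w b => ?_,
    by simp [finrank_eq_card_basis e]⟩
  simp only [mul_smul, e.mainEq_det w b, Finset.smul_sum]

/-- The basis `(1, 0), (0, b 0), …, (0, b (n - 1))` of `F × V`. -/
noncomputable def finConsProd (b : Basis (Fin n) F V) : Basis (Fin (n + 1)) F (F × V) :=
  .ofEquivFun <| ((LinearEquiv.refl F F).prodCongr b.equivFun).trans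
    (Fin.consLinearEquiv F fun _ => F)

theorem det_finConsProd (b : Basis (Fin n) F V) (w : Fin (n + 1) → F × V) :
    b.finConsProd.det w = ∑ i : Fin (n + 1),
      (-1 : F) ^ (i : ℕ) * (w i).1 * b.det (fun j => (w (i.succAbove j)).2) := by
  rw [det_apply, Matrix.det_succ_row_zero]
  congr!

end Module.Basis

theorem stmt_12_general (F V : Type*) [Field F] [AddCommGroup V] [Module F V]
    (n : ℕ) (D : (Fin n → V) → F)
    (hD : IsDeterminant F V n D) :
    IsDeterminant F (F × V) (n + 1)
      (fun w : Fin (n + 1) → F × V =>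
        ∑ i : Fin (n + 1),
          (-1 : F) ^ (i : ℕ) * (w i).1 * D (fun j => (w (i.succAbove j)).2)) := by
  obtain ⟨hne, hmain, hrank⟩ := hD
  have := hmain.finite hne
  let b := Module.finBasisOfFinrankEq F V hrank
  have hc : D b ≠ 0 := fun h => hne (funext fun v => by simp [hmain.eq_mul_det hrank b v, h])
  convert b.finConsProd.isDeterminant_mul_det hc using 2 with w
  rw [b.det_finConsProd, Finset.mul_sum]
  congr! 1 with i
  rw [hmain.eq_mul_det hrank b]
  ring

theorem stmt_12 (F V : Type*) [Field F] [AddCommGroup V] [Module F V]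
    (n : ℕ) (hn : 1 ≤ n) (D : (Fin n → V) → F)
    (hD : IsDeterminant F V n D) :
    IsDeterminant F (F × V) (n + 1)
      (fun w : Fin (n + 1) → F × V =>
        ∑ i : Fin (n + 1),
          (-1 : F) ^ (i : ℕ) * (w i).1 * D (fun j => (w (i.succAbove j)).2)) :=
  stmt_12_general F V n D hD
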